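/- Let (A,V,χ,F,ν) be a crossed product system with preunit and assume F is a cocycle satisfying the twisted module condition. Then μ_𝓔 is an associative product on A⊗V, it is left and right A-linear (μ_𝓔((a·x)⊗y) = a·μ_𝓔(x⊗y) and μ_𝓔(x⊗(y·a)) = μ_𝓔(x⊗y)·a for all a ∈ A, x,y ∈ A⊗V), and it is normalized with respect to ∇_χ: ∇_χ(μ_𝓔(x⊗y)) = μ_𝓔(x⊗y) = μ_𝓔(∇_χ(x)⊗∇_χ(y)) for all x,y ∈ A⊗V. -/
import Mathlib


open TensorProduct

noncomputable section

namespace WeakCrossedProduct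

variable {k : Type*} [Field k]
variable {A : Type*} [Ring A] [Algebra k A]
variable {V : Type*} [AddCommGroup V] [Module k V]

/-- The map `A ⊗ₖ (A ⊗ₖ V) → A ⊗ₖ V`, `a ⊗ x ↦ a • x`, i.e. `μ_A ⊗ id_V`. -/
def actMap : A ⊗[k] (A ⊗[k] V) →ₗ[k] A ⊗[k] V :=
  TensorProduct.lift (LinearMap.mk₂ k (fun (a : A) (x : A ⊗[k] V) => a • x)
    (fun a b x => add_smul a b x)
    (fun c a x => smul_assoc c a x)
    (fun a x y => smul_add a x y)
    (fun c a x => smul_comm a c x))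

/-- Given `g : V → A ⊗ V`, the map `A ⊗ V → A ⊗ V`, `a ⊗ u ↦ a • g u`. -/
def smulMap (g : V →ₗ[k] A ⊗[k] V) : A ⊗[k] V →ₗ[k] A ⊗[k] V :=
  TensorProduct.lift (LinearMap.mk₂ k (fun (a : A) (u : V) => a • g u)
    (fun a b u => add_smul a b (g u))
    (fun c a u => smul_assoc c a (g u))
    (fun a u u' => show a • g (u + u') = a • g u + a • g u' by
      rw [map_add, smul_add])
    (fun c a u => show a • g (c • u) = c • (a • g u) by
      rw [map_smul]; exact smul_comm a c (g u)))

/-- The right action of `a' ∈ A` on `A ⊗ V`: `(a ⊗ v) · a' := a • χ (v ⊗ a')`. -/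
def ract (χ : V ⊗[k] A →ₗ[k] A ⊗[k] V) (a' : A) : A ⊗[k] V →ₗ[k] A ⊗[k] V :=
  smulMap (χ ∘ₗ (TensorProduct.mk k V A).flip a')

/-- `(A,V,χ)` is a twisted space:
`χ ∘ (id_V ⊗ μ_A) = (μ_A ⊗ id_V) ∘ (id_A ⊗ χ) ∘ (χ ⊗ id_A)` (stated on pure tensors). -/
def IsTwisting (χ : V ⊗[k] A →ₗ[k] A ⊗[k] V) : Prop :=
  ∀ (v : V) (a b : A), χ (v ⊗ₜ[k] (a * b)) = ract χ b (χ (v ⊗ₜ[k] a))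

/-- `∇_χ(x) := x · 1_A`. -/
def nabla (χ : V ⊗[k] A →ₗ[k] A ⊗[k] V) : A ⊗[k] V →ₗ[k] A ⊗[k] V :=
  ract χ 1

/-- `A × V := ∇_χ(A ⊗ V)`. -/
def AxV (χ : V ⊗[k] A →ₗ[k] A ⊗[k] V) : Submodule k (A ⊗[k] V) :=
  LinearMap.range (nabla χ)

/-- `X_χ := {x ∈ A ⊗ V : x · 1_A = 0}`. -/
def Xchi (χ : V ⊗[k] A →ₗ[k] A ⊗[k] V) : Submodule k (A ⊗[k] V) :=
  LinearMap.ker (nabla χ)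

/-- `μ_𝓔 := (μ_A ⊗ id_V) ∘ (μ_A ⊗ F) ∘ (id_A ⊗ χ ⊗ id_V)`. -/
def muE (χ : V ⊗[k] A →ₗ[k] A ⊗[k] V) (F : V ⊗[k] V →ₗ[k] A ⊗[k] V) :
    (A ⊗[k] V) ⊗[k] (A ⊗[k] V) →ₗ[k] A ⊗[k] V :=
  actMap ∘ₗ
  LinearMap.lTensor A (actMap) ∘ₗ
  LinearMap.lTensor A (LinearMap.lTensor A F ∘ₗ (TensorProduct.assoc k A V V).toLinearMap) ∘ₗ
  LinearMap.lTensor A (LinearMap.rTensor V χ) ∘ₗ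
  LinearMap.lTensor A (TensorProduct.assoc k V A V).symm.toLinearMap ∘ₗ
  (TensorProduct.assoc k A V (A ⊗[k] V)).toLinearMap

/-- The twisted module condition (stated on pure tensors). -/
def TwistedModuleCond (χ : V ⊗[k] A →ₗ[k] A ⊗[k] V) (F : V ⊗[k] V →ₗ[k] A ⊗[k] V) : Prop :=
  ∀ (v w : V) (a : A),
    ract χ a (F (v ⊗ₜ[k] w)) = muE χ F (((1 : A) ⊗ₜ[k] v) ⊗ₜ[k] χ (w ⊗ₜ[k] a))

/-- The cocycle condition (stated on pure tensors). -/
def CocycleCond (χ : V ⊗[k] A →ₗ[k] A ⊗[k] V) (F : V ⊗[k] V →ₗ[k] A ⊗[k] V) : Prop :=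
  ∀ (v w u : V),
    smulMap (F ∘ₗ (TensorProduct.mk k V V).flip u) (F (v ⊗ₜ[k] w)) =
      muE χ F (((1 : A) ⊗ₜ[k] v) ⊗ₜ[k] F (w ⊗ₜ[k] u))

/-- Preunit condition (i). -/
def Preunit1 (χ : V ⊗[k] A →ₗ[k] A ⊗[k] V) (F : V ⊗[k] V →ₗ[k] A ⊗[k] V)
    (ν : A ⊗[k] V) : Prop :=
  ∀ v : V, muE χ F (((1 : A) ⊗ₜ[k] v) ⊗ₜ[k] ν) = nabla χ ((1 : A) ⊗ₜ[k] v)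

/-- Preunit condition (ii). -/
def Preunit2 (χ : V ⊗[k] A →ₗ[k] A ⊗[k] V) (F : V ⊗[k] V →ₗ[k] A ⊗[k] V)
    (ν : A ⊗[k] V) : Prop :=
  ∀ v : V, smulMap (F ∘ₗ (TensorProduct.mk k V V).flip v) ν = nabla χ ((1 : A) ⊗ₜ[k] v)

/-- Preunit condition (iii). -/
def Preunit3 (χ : V ⊗[k] A →ₗ[k] A ⊗[k] V) (ν : A ⊗[k] V) : Prop :=
  ∀ a : A, ract χ a ν = a • ν

/-- `γ(v) := ∇_χ(1_A ⊗ v)`. -/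
def gammaMap (χ : V ⊗[k] A →ₗ[k] A ⊗[k] V) : V → A ⊗[k] V :=
  fun v => nabla χ ((1 : A) ⊗ₜ[k] v)

/-- `j'_ν(a) := a · ν(1)`. -/
def jnu' (ν : A ⊗[k] V) : A → A ⊗[k] V := fun a => a • ν

/-- `j_ν(a) := ∇_χ(j'_ν(a))`. -/
def jnu (χ : V ⊗[k] A →ₗ[k] A ⊗[k] V) (ν : A ⊗[k] V) : A → A ⊗[k] V :=
  fun a => nabla χ (a • ν)


section Aux

variable (χ : V ⊗[k] A →ₗ[k] A ⊗[k] V) (F : V ⊗[k] V →ₗ[k] A ⊗[k] V)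

lemma smulMap_tmul (g : V →ₗ[k] A ⊗[k] V) (a : A) (u : V) :
    smulMap g (a ⊗ₜ[k] u) = a • g u := rfl

lemma actMap_tmul (a : A) (x : A ⊗[k] V) : actMap (a ⊗ₜ[k] x) = a • x := rfl

lemma smulMap_smul (g : V →ₗ[k] A ⊗[k] V) (a : A) (x : A ⊗[k] V) :
    smulMap g (a • x) = a • smulMap g x := by
  induction x using TensorProduct.induction_on with
  | zero => simp
  | tmul b u => rw [smul_tmul', smul_eq_mul, smulMap_tmul, smulMap_tmul, mul_smul]
  | add x y hx hy => rw [smul_add, map_add, hx, hy, map_add, smul_add]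

/-- `Tw F w : A ⊗ V → A ⊗ V`, `c ⊗ u ↦ c • F (u ⊗ w)`. -/
def Tw (w : V) : A ⊗[k] V →ₗ[k] A ⊗[k] V :=
  smulMap (F ∘ₗ (TensorProduct.mk k V V).flip w)

lemma Tw_tmul (w : V) (a : A) (u : V) :
    Tw F w (a ⊗ₜ[k] u) = a • F (u ⊗ₜ[k] w) := rfl

lemma Tw_smul (w : V) (a : A) (x : A ⊗[k] V) :
    Tw F w (a • x) = a • Tw F w x := smulMap_smul _ a x

lemma ract_tmul (a' a : A) (v : V) :
    ract χ a' (a ⊗ₜ[k] v) = a • χ (v ⊗ₜ[k] a') := rfl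

lemma ract_smul (a' a : A) (x : A ⊗[k] V) :
    ract χ a' (a • x) = a • ract χ a' x := smulMap_smul _ a x

lemma nabla_smul (a : A) (x : A ⊗[k] V) :
    nabla χ (a • x) = a • nabla χ x := ract_smul χ 1 a x

lemma muE_tmul (a : A) (v : V) (b : A) (w : V) :
    muE χ F ((a ⊗ₜ[k] v) ⊗ₜ[k] (b ⊗ₜ[k] w)) = a • Tw F w (χ (v ⊗ₜ[k] b)) := by
  have key : ∀ z : A ⊗[k] V,
      actMap ((LinearMap.lTensor A F) ((TensorProduct.assoc k A V V) (z ⊗ₜ[k] w)))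
        = Tw F w z := by
    intro z
    induction z using TensorProduct.induction_on with
    | zero => simp
    | tmul c u => simp [Tw_tmul, actMap_tmul]
    | add x y hx hy => rw [TensorProduct.add_tmul, map_add, map_add, map_add, hx, hy, map_add]
  simp only [muE, LinearMap.comp_apply, TensorProduct.assoc_tmul,
    LinearMap.lTensor_tmul, LinearEquiv.coe_coe, TensorProduct.assoc_symm_tmul,
    LinearMap.rTensor_tmul, actMap_tmul]
  rw [key]

lemma ract_mul (hχ : IsTwisting χ) (b c : A) (x : A ⊗[k] V) :
    ract χ (b * c) x = ract χ c (ract χ b x) := by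
  induction x using TensorProduct.induction_on with
  | zero => simp
  | tmul a v => rw [ract_tmul, ract_tmul, ract_smul, hχ]
  | add x y hx hy => rw [map_add, map_add, map_add, hx, hy]

lemma muE_smul_left (a : A) (x y : A ⊗[k] V) :
    muE χ F ((a • x) ⊗ₜ[k] y) = a • muE χ F (x ⊗ₜ[k] y) := by
  induction x using TensorProduct.induction_on with
  | zero => simp
  | tmul c u =>
    induction y using TensorProduct.induction_on with
    | zero => simp
    | tmul b w =>
      rw [smul_tmul', smul_eq_mul, muE_tmul, muE_tmul, mul_smul]
    | add y z hy hz =>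
      rw [TensorProduct.tmul_add, TensorProduct.tmul_add, map_add, map_add, hy, hz, smul_add]
  | add x x' hx hx' =>
    rw [smul_add, TensorProduct.add_tmul, TensorProduct.add_tmul, map_add, map_add,
      hx, hx', smul_add]

lemma muE_tmul_left (a : A) (u : V) (y : A ⊗[k] V) :
    muE χ F ((a ⊗ₜ[k] u) ⊗ₜ[k] y) = a • muE χ F (((1 : A) ⊗ₜ[k] u) ⊗ₜ[k] y) := by
  rw [← muE_smul_left, smul_tmul', smul_eq_mul, mul_one]

lemma muE_right (z : A ⊗[k] V) (c : A) (w : V) :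
    muE χ F (z ⊗ₜ[k] (c ⊗ₜ[k] w)) = Tw F w (ract χ c z) := by
  induction z using TensorProduct.induction_on with
  | zero => simp
  | tmul a v => rw [muE_tmul, ract_tmul, Tw_smul]
  | add x y hx hy => rw [TensorProduct.add_tmul, map_add, map_add, map_add, hx, hy]

lemma muE_smul_right (hχ : IsTwisting χ) (x : A ⊗[k] V) (b : A) (y : A ⊗[k] V) :
    muE χ F (x ⊗ₜ[k] (b • y)) = muE χ F (ract χ b x ⊗ₜ[k] y) := by
  induction y using TensorProduct.induction_on with
  | zero => simp
  | tmul c w =>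
    rw [smul_tmul', smul_eq_mul, muE_right, muE_right, ract_mul χ hχ]
  | add y z hy hz =>
    rw [smul_add, TensorProduct.tmul_add, TensorProduct.tmul_add, map_add, map_add, hy, hz]

lemma ract_Tw (htm : TwistedModuleCond χ F) (a : A) (w : V) (z : A ⊗[k] V) :
    ract χ a (Tw F w z) = muE χ F (z ⊗ₜ[k] χ (w ⊗ₜ[k] a)) := by
  induction z using TensorProduct.induction_on with
  | zero => simp
  | tmul c u =>
    rw [Tw_tmul, ract_smul, htm u w a, muE_tmul_left χ F c u]
  | add x y hx hy =>
    rw [map_add, map_add, hx, hy, TensorProduct.add_tmul, map_add]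

lemma nabla_idem (hχ : IsTwisting χ) (x : A ⊗[k] V) :
    nabla χ (nabla χ x) = nabla χ x := by
  induction x using TensorProduct.induction_on with
  | zero => simp
  | tmul a v =>
    have := hχ v 1 1
    rw [one_mul] at this
    rw [nabla, ract_tmul, ract_smul, ← this]
  | add x y hx hy => simp only [map_add, hx, hy]

lemma nabla_F (hχ : IsTwisting χ) (hF : ∀ x : V ⊗[k] V, F x ∈ AxV χ)
    (t : V ⊗[k] V) : nabla χ (F t) = F t := by
  obtain ⟨x, hx⟩ := hF t
  rw [← hx, nabla_idem χ hχ]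

lemma nabla_Tw (hχ : IsTwisting χ) (hF : ∀ x : V ⊗[k] V, F x ∈ AxV χ)
    (w : V) (z : A ⊗[k] V) : nabla χ (Tw F w z) = Tw F w z := by
  induction z using TensorProduct.induction_on with
  | zero => simp
  | tmul c u => rw [Tw_tmul, nabla_smul, nabla_F χ F hχ hF]
  | add x y hx hy => rw [map_add, map_add, hx, hy]

lemma TwTw (hcoc : CocycleCond χ F) (t w : V) (z : A ⊗[k] V) :
    Tw F w (Tw F t z) = muE χ F (z ⊗ₜ[k] F (t ⊗ₜ[k] w)) := by
  induction z using TensorProduct.induction_on with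
  | zero => simp
  | tmul e s =>
    rw [Tw_tmul, Tw_smul, muE_tmul_left]
    congr 1
    exact hcoc s t w
  | add x y hx hy => rw [map_add, map_add, hx, hy, TensorProduct.add_tmul, map_add]

lemma Tw_muE (hχ : IsTwisting χ) (hcoc : CocycleCond χ F) (w : V)
    (z₁ z₂ : A ⊗[k] V) :
    Tw F w (muE χ F (z₁ ⊗ₜ[k] z₂)) = muE χ F (z₁ ⊗ₜ[k] Tw F w z₂) := by
  induction z₁ using TensorProduct.induction_on with
  | zero => simp
  | tmul e s =>
    rw [muE_tmul_left χ F e s z₂, muE_tmul_left χ F e s (Tw F w z₂), Tw_smul]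
    refine congrArg (fun q => e • q) ?_
    induction z₂ using TensorProduct.induction_on with
    | zero => simp
    | tmul d t =>
      have h1 : muE χ F (((1 : A) ⊗ₜ[k] s) ⊗ₜ[k] (d ⊗ₜ[k] t))
          = Tw F t (χ (s ⊗ₜ[k] d)) := by
        rw [muE_right, ract_tmul, one_smul]
      have h2 : muE χ F (((1 : A) ⊗ₜ[k] s) ⊗ₜ[k] (d • F (t ⊗ₜ[k] w)))
          = muE χ F (χ (s ⊗ₜ[k] d) ⊗ₜ[k] F (t ⊗ₜ[k] w)) := by
        rw [muE_smul_right χ F hχ, ract_tmul, one_smul]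
      rw [h1, TwTw χ F hcoc, Tw_tmul, h2]
    | add x y hx hy =>
      rw [TensorProduct.tmul_add, map_add, map_add, hx, hy, map_add,
        TensorProduct.tmul_add, map_add]
  | add x y hx hy =>
    rw [TensorProduct.add_tmul, TensorProduct.add_tmul, map_add, map_add, hx, hy, map_add]

end Aux

theorem statement_4 (χ : V ⊗[k] A →ₗ[k] A ⊗[k] V) (F : V ⊗[k] V →ₗ[k] A ⊗[k] V)
    (ν : A ⊗[k] V)
    (hχ : IsTwisting χ) (hF : ∀ x : V ⊗[k] V, F x ∈ AxV χ)
    (hν1 : Preunit1 χ F ν) (hν2 : Preunit2 χ F ν) (hν3 : Preunit3 χ ν)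
    (htm : TwistedModuleCond χ F) (hcoc : CocycleCond χ F) :
    (∀ x y z : A ⊗[k] V,
      muE χ F (muE χ F (x ⊗ₜ[k] y) ⊗ₜ[k] z) = muE χ F (x ⊗ₜ[k] muE χ F (y ⊗ₜ[k] z))) ∧
    (∀ (a : A) (x y : A ⊗[k] V), muE χ F ((a • x) ⊗ₜ[k] y) = a • muE χ F (x ⊗ₜ[k] y)) ∧
    (∀ (a : A) (x y : A ⊗[k] V),
      muE χ F (x ⊗ₜ[k] ract χ a y) = ract χ a (muE χ F (x ⊗ₜ[k] y))) ∧
    (∀ x y : A ⊗[k] V,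
      nabla χ (muE χ F (x ⊗ₜ[k] y)) = muE χ F (x ⊗ₜ[k] y) ∧
      muE χ F (x ⊗ₜ[k] y) = muE χ F (nabla χ x ⊗ₜ[k] nabla χ y)) := by
  have h3 : ∀ (a : A) (x y : A ⊗[k] V),
      muE χ F (x ⊗ₜ[k] ract χ a y) = ract χ a (muE χ F (x ⊗ₜ[k] y)) := by
    intro a x y
    induction y using TensorProduct.induction_on with
    | zero => simp
    | tmul b w =>
      rw [ract_tmul, muE_smul_right χ F hχ, muE_right, ract_Tw χ F htm]
    | add y y' hy hy' =>
      simp only [map_add, TensorProduct.tmul_add, hy, hy']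
  have h4c : ∀ x y : A ⊗[k] V, muE χ F (x ⊗ₜ[k] nabla χ y) = muE χ F (x ⊗ₜ[k] y) := by
    intro x y
    induction y using TensorProduct.induction_on with
    | zero => simp
    | tmul b w =>
      have e1 : nabla χ (b ⊗ₜ[k] w) = b • χ (w ⊗ₜ[k] (1 : A)) := rfl
      have e2 : muE χ F (ract χ b x ⊗ₜ[k] χ (w ⊗ₜ[k] (1 : A)))
          = nabla χ (Tw F w (ract χ b x)) := (ract_Tw χ F htm 1 w _).symm
      rw [e1, muE_smul_right χ F hχ, e2, nabla_Tw χ F hχ hF, ← muE_right]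
    | add y y' hy hy' => simp only [map_add, TensorProduct.tmul_add, hy, hy']
  refine ⟨?_, muE_smul_left χ F, h3, ?_⟩
  · intro x y z
    induction x using TensorProduct.induction_on with
    | zero => simp
    | tmul a u =>
      induction y using TensorProduct.induction_on with
      | zero => simp
      | tmul b v =>
        induction z using TensorProduct.induction_on with
        | zero => simp
        | tmul c w =>
          rw [muE_tmul χ F a u b v, muE_smul_left, muE_right, ract_Tw χ F htm,
            muE_tmul χ F b v c w, muE_smul_right χ F hχ, ract_tmul, muE_smul_left,
            Tw_muE χ F hχ hcoc]
        | add z z' hz hz' => simp only [map_add, TensorProduct.tmul_add, hz, hz']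
      | add y y' hy hy' =>
        simp only [map_add, TensorProduct.tmul_add, TensorProduct.add_tmul, hy, hy']
    | add x x' hx hx' =>
      simp only [map_add, TensorProduct.tmul_add, TensorProduct.add_tmul, hx, hx']
  · intro x y
    constructor
    · induction x using TensorProduct.induction_on with
      | zero => simp
      | tmul a u =>
        induction y using TensorProduct.induction_on with
        | zero => simp
        | tmul b w => rw [muE_tmul, nabla_smul, nabla_Tw χ F hχ hF]
        | add y y' hy hy' => simp only [map_add, TensorProduct.tmul_add, hy, hy']
      | add x x' hx hx' => simp only [map_add, TensorProduct.add_tmul, hx, hx']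
    · have h4b : muE χ F (nabla χ x ⊗ₜ[k] nabla χ y) = muE χ F (x ⊗ₜ[k] nabla χ y) := by
        have h := muE_smul_right χ F hχ x 1 (nabla χ y)
        rw [one_smul] at h
        exact h.symm
      rw [h4b, h4c]

end WeakCrossedProduct
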